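/- Let n ≥ 1. Then the map Z ↦ J(Z) is a bijection from the Siegel upper half space 𝒮ₙ (complex symmetric n×n matrices Z = X + iY with Y positive definite) onto the set of ω₀-compatible linear complex structures {J ∈ ℝ^{2n×2n} : J² = -𝟙, ω₀(Ju,Jv) = ω₀(u,v) for all u,v ∈ ℝ^{2n}, and ω₀(u,Ju) > 0 for all u ≠ 0}. -/

import Mathlib

open Matrix

/-- The standard linear complex structure `J₀ = ((0, -𝟙ₙ),(𝟙ₙ, 0))` on `ℝ^{2n}`,
with `ℝ^{2n}` indexed by `Fin n ⊕ Fin n`. -/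
noncomputable def J0 (n : ℕ) : Matrix (Fin n ⊕ Fin n) (Fin n ⊕ Fin n) ℝ :=
  Matrix.fromBlocks 0 (-1) 1 0

/-- The standard symplectic form `ω₀(u,v) = ⟨J₀u, v⟩` on `ℝ^{2n}`. -/
noncomputable def omega0 (n : ℕ) (u v : Fin n ⊕ Fin n → ℝ) : ℝ :=
  dotProduct ((J0 n).mulVec u) v

/-- The linear complex structure `J(Z)` associated to a point `Z = X + iY` of
the Siegel upper half space: the block matrix
`((XY⁻¹, -Y - XY⁻¹X),(Y⁻¹, -Y⁻¹X))`. -/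
noncomputable def Jsiegel (n : ℕ) (X Y : Matrix (Fin n) (Fin n) ℝ) :
    Matrix (Fin n ⊕ Fin n) (Fin n ⊕ Fin n) ℝ :=
  Matrix.fromBlocks (X * Y⁻¹) (-Y - X * Y⁻¹ * X) Y⁻¹ (-(Y⁻¹ * X))

/-- The Siegel upper half space, described by the pairs `(X,Y)` of real
symmetric `n×n` matrices with `Y` positive definite representing
`Z = X + iY`. -/
def siegelSpace (n : ℕ) :
    Set (Matrix (Fin n) (Fin n) ℝ × Matrix (Fin n) (Fin n) ℝ) :=
  {p | p.1ᵀ = p.1 ∧ p.2ᵀ = p.2 ∧ p.2.PosDef}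

/-- The set of `ω₀`-compatible linear complex structures on `ℝ^{2n}`. -/
def compatibleJ (n : ℕ) : Set (Matrix (Fin n ⊕ Fin n) (Fin n ⊕ Fin n) ℝ) :=
  {J | J * J = -1 ∧
    (∀ u v, omega0 n (J.mulVec u) (J.mulVec v) = omega0 n u v) ∧
    (∀ u, u ≠ 0 → 0 < omega0 n u (J.mulVec u))}

/-!
Since `ω₀(u, v) = uᵀ J₀ᵀ v`, a matrix `J` with `J² = -1` is `ω₀`-compatible iff `J₀ᵀ J` is
positive definite: for such `J`, preserving `ω₀` is equivalent to the symmetry of `J₀ᵀ J`.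
For `J = J(X + iY)` the matrix `J₀ᵀ J` has blocks `((Y⁻¹, -Y⁻¹X), (-XY⁻¹, Y + XY⁻¹X))`; it is
symmetric iff `X` is, and is then positive definite because its Schur complement is `Y`.
Conversely, the lower left block `C` of a compatible `J` is positive definite, and `J² = -1`
determines the right block column of `J` from the left one, so `J = J(AC⁻¹ + iC⁻¹)`.
-/

namespace Matrix

variable {m n R : Type*}

open scoped ComplexOrder in
theorem PosDef.fromBlocks₁₁_posDef {𝕜 : Type*} [RCLike 𝕜] [Fintype m] [Fintype n]
    [DecidableEq m] [DecidableEq n] {A : Matrix m m 𝕜} (B : Matrix m n 𝕜) (D : Matrix n n 𝕜)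
    (hA : A.PosDef) (hS : (D - Bᴴ * A⁻¹ * B).PosDef) : (fromBlocks A B Bᴴ D).PosDef := by
  let _ := hA.isUnit.invertible
  refine ((hA.fromBlocks₁₁ B D).mpr hS.posSemidef).posDef_iff_det_ne_zero.mpr ?_
  rw [det_fromBlocks₁₁, invOf_eq_nonsing_inv]
  exact mul_ne_zero hA.det_pos.ne' hS.det_pos.ne'

theorem ext_of_dotProduct_mulVec [Fintype n] [DecidableEq n] [CommSemiring R]
    {M N : Matrix n n R} (h : ∀ u v : n → R, u ⬝ᵥ (M *ᵥ v) = u ⬝ᵥ (N *ᵥ v)) : M = N := by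
  ext i j
  simpa [mulVec_single, single_dotProduct] using h (Pi.single i 1) (Pi.single j 1)

theorem transpose_mul_mul_self_eq_iff [Fintype n] [DecidableEq n] [CommRing R]
    {Ω J : Matrix n n R} (hΩ : Ωᵀ = -Ω) (hJ : J * J = -1) :
    Jᵀ * Ω * J = Ω ↔ (Ω * J)ᵀ = Ω * J := by
  rw [transpose_mul, hΩ, Matrix.mul_neg]
  constructor
  · intro h
    calc -(Jᵀ * Ω) = Jᵀ * Ω * J * J := by
          rw [Matrix.mul_assoc _ J, hJ, Matrix.mul_neg, Matrix.mul_one]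
      _ = Ω * J := by rw [h]
  · intro h
    calc Jᵀ * Ω * J = -(Ω * J * J) := by rw [← h, Matrix.neg_mul, neg_neg]
      _ = Ω := by rw [Matrix.mul_assoc, hJ, Matrix.mul_neg, Matrix.mul_one, neg_neg]

theorem fromBlocks_eq_of_mul_self_eq_neg_one [Fintype n] [DecidableEq n] [CommRing R]
    {A B B' C D D' : Matrix n n R} (hC : IsUnit C)
    (h : fromBlocks A B C D * fromBlocks A B C D = -1)
    (h' : fromBlocks A B' C D' * fromBlocks A B' C D' = -1) :
    fromBlocks A B C D = fromBlocks A B' C D' := by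
  rw [fromBlocks_multiply, ← fromBlocks_one, fromBlocks_neg] at h h'
  obtain ⟨h₁₁, -, h₂₁, -⟩ := fromBlocks_inj.mp h
  obtain ⟨h₁₁', -, h₂₁', -⟩ := fromBlocks_inj.mp h'
  have hB : B * C = B' * C := by rw [← add_right_inj (A * A), h₁₁, h₁₁']
  have hD : D * C = D' * C := by rw [← add_right_inj (C * A), h₂₁, h₂₁']
  rw [hC.mul_left_inj.mp hB, hC.mul_left_inj.mp hD]

end Matrix

section Siegel

variable {n : ℕ}

theorem J0_transpose : (J0 n)ᵀ = -J0 n := by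
  rw [J0, fromBlocks_transpose, fromBlocks_neg]
  simp

theorem J0_transpose_mul_fromBlocks (A B C D : Matrix (Fin n) (Fin n) ℝ) :
    (J0 n)ᵀ * fromBlocks A B C D = fromBlocks C D (-A) (-B) := by
  rw [J0_transpose, J0, fromBlocks_neg, fromBlocks_multiply]
  simp

theorem omega0_eq_dotProduct (u v : Fin n ⊕ Fin n → ℝ) :
    omega0 n u v = u ⬝ᵥ ((J0 n)ᵀ *ᵥ v) := by
  rw [omega0, dotProduct_mulVec, vecMul_transpose]

theorem omega0_mulVec_mulVec (M N : Matrix (Fin n ⊕ Fin n) (Fin n ⊕ Fin n) ℝ)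
    (u v : Fin n ⊕ Fin n → ℝ) :
    omega0 n (M *ᵥ u) (N *ᵥ v) = u ⬝ᵥ ((Mᵀ * (J0 n)ᵀ * N) *ᵥ v) := by
  rw [omega0_eq_dotProduct, ← vecMul_transpose M, ← dotProduct_mulVec, mulVec_mulVec,
    mulVec_mulVec, Matrix.mul_assoc]

theorem mem_compatibleJ_iff {J : Matrix (Fin n ⊕ Fin n) (Fin n ⊕ Fin n) ℝ} :
    J ∈ compatibleJ n ↔ J * J = -1 ∧ ((J0 n)ᵀ * J).PosDef := by
  simp only [compatibleJ, Set.mem_ofPred_eq, posDef_iff_dotProduct_mulVec]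
  refine and_congr_right fun hJ => and_congr ?_ ?_
  · calc (∀ u v, omega0 n (J *ᵥ u) (J *ᵥ v) = omega0 n u v)
        ↔ Jᵀ * (J0 n)ᵀ * J = (J0 n)ᵀ := by
          simp_rw [omega0_mulVec_mulVec, omega0_eq_dotProduct]
          exact ⟨ext_of_dotProduct_mulVec, fun h u v => by rw [h]⟩
      _ ↔ ((J0 n)ᵀ * J)ᵀ = (J0 n)ᵀ * J :=
          transpose_mul_mul_self_eq_iff (by rw [transpose_transpose, J0_transpose, neg_neg]) hJ
      _ ↔ ((J0 n)ᵀ * J).IsHermitian := by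
          rw [IsHermitian, conjTranspose_eq_transpose_of_trivial]
  · simp only [omega0_eq_dotProduct, mulVec_mulVec, star_trivial]

theorem Jsiegel_mul_self (X : Matrix (Fin n) (Fin n) ℝ) {Y : Matrix (Fin n) (Fin n) ℝ}
    (hY : IsUnit Y.det) : Jsiegel n X Y * Jsiegel n X Y = -1 := by
  rw [Jsiegel, fromBlocks_multiply, ← fromBlocks_one, fromBlocks_neg]
  congr 1 <;>
    simp only [Matrix.mul_assoc, Matrix.mul_sub, Matrix.sub_mul, Matrix.mul_neg, Matrix.neg_mul,
      Matrix.mul_one, mul_nonsing_inv _ hY, nonsing_inv_mul _ hY,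
      mul_nonsing_inv_cancel_left _ _ hY] <;>
    abel

theorem J0_transpose_mul_Jsiegel (X Y : Matrix (Fin n) (Fin n) ℝ) :
    (J0 n)ᵀ * Jsiegel n X Y = fromBlocks Y⁻¹ (-(Y⁻¹ * X)) (-(X * Y⁻¹)) (Y + X * Y⁻¹ * X) := by
  rw [Jsiegel, J0_transpose_mul_fromBlocks, neg_sub', neg_neg, sub_neg_eq_add]

theorem posDef_J0_transpose_mul_Jsiegel_iff {X Y : Matrix (Fin n) (Fin n) ℝ} (hY : Y.PosDef) :
    ((J0 n)ᵀ * Jsiegel n X Y).PosDef ↔ Xᵀ = X := by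
  have hYt : Yᵀ = Y := hY.isHermitian
  have hdet : IsUnit Y.det := hY.det_pos.ne'.isUnit
  have hB : (-(Y⁻¹ * X))ᴴ = -(Xᵀ * Y⁻¹) := by
    rw [conjTranspose_eq_transpose_of_trivial, transpose_neg, transpose_mul, transpose_nonsing_inv,
      hYt]
  rw [J0_transpose_mul_Jsiegel]
  constructor
  · intro h
    obtain ⟨-, hBC, -, -⟩ := isHermitian_fromBlocks_iff.mp h.isHermitian
    rw [hB, neg_inj] at hBC
    exact hY.inv.isUnit.mul_left_inj.mp hBC
  · intro hX
    rw [show -(X * Y⁻¹) = (-(Y⁻¹ * X))ᴴ by rw [hB, hX]]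
    have hschur : Y + X * Y⁻¹ * X - (-(Y⁻¹ * X))ᴴ * Y⁻¹⁻¹ * -(Y⁻¹ * X) = Y := by
      rw [hB, hX, nonsing_inv_nonsing_inv _ hdet]
      simp [Matrix.mul_assoc, mul_nonsing_inv_cancel_left _ _ hdet]
    exact hY.inv.fromBlocks₁₁_posDef _ _ (hschur.symm ▸ hY)

theorem Jsiegel_mem_compatibleJ_iff {X Y : Matrix (Fin n) (Fin n) ℝ} (hY : Y.PosDef) :
    Jsiegel n X Y ∈ compatibleJ n ↔ Xᵀ = X := by
  rw [mem_compatibleJ_iff, posDef_J0_transpose_mul_Jsiegel_iff hY]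
  exact and_iff_right (Jsiegel_mul_self X hY.det_pos.ne'.isUnit)

theorem Jsiegel_injOn :
    Set.InjOn (fun p : Matrix (Fin n) (Fin n) ℝ × Matrix (Fin n) (Fin n) ℝ => Jsiegel n p.1 p.2)
      {p | IsUnit p.2.det} := by
  rintro ⟨X, Y⟩ (hY : IsUnit Y.det) ⟨X', Y'⟩ (hY' : IsUnit Y'.det) h
  obtain ⟨hXY, -, hY'Y, -⟩ := fromBlocks_inj.mp h
  have hYeq : Y = Y' := inv_inj hY'Y hY
  subst hYeq
  rw [← nonsing_inv_mul_cancel_right Y X hY, hXY, nonsing_inv_mul_cancel_right Y X' hY]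

theorem toBlocks₂₁_posDef_of_mem_compatibleJ {J : Matrix (Fin n ⊕ Fin n) (Fin n ⊕ Fin n) ℝ}
    (hJ : J ∈ compatibleJ n) : J.toBlocks₂₁.PosDef := by
  have hG := (mem_compatibleJ_iff.mp hJ).2
  rw [← fromBlocks_toBlocks J, J0_transpose_mul_fromBlocks] at hG
  exact hG.submatrix Sum.inl_injective

theorem exists_Jsiegel_eq {J : Matrix (Fin n ⊕ Fin n) (Fin n ⊕ Fin n) ℝ} (hJ : J * J = -1)
    (hC : J.toBlocks₂₁.PosDef) : ∃ X Y, Y.PosDef ∧ Jsiegel n X Y = J := by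
  obtain ⟨A, B, C, D, rfl⟩ : ∃ A B C D, J = fromBlocks A B C D :=
    ⟨_, _, _, _, (fromBlocks_toBlocks J).symm⟩
  rw [toBlocks_fromBlocks₂₁] at hC
  have hdet : IsUnit C.det := hC.det_pos.ne'.isUnit
  refine ⟨A * C⁻¹, C⁻¹, hC.inv, ?_⟩
  have hJs := Jsiegel_mul_self (A * C⁻¹) (isUnit_nonsing_inv_det C hdet)
  rw [Jsiegel, nonsing_inv_nonsing_inv C hdet, nonsing_inv_mul_cancel_right C A hdet] at hJs ⊢
  exact fromBlocks_eq_of_mul_self_eq_neg_one hC.isUnit hJs hJ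

end Siegel

theorem siegel_bijOn_compatible_general (n : ℕ) :
    Set.BijOn (fun p : Matrix (Fin n) (Fin n) ℝ × Matrix (Fin n) (Fin n) ℝ =>
      Jsiegel n p.1 p.2) (siegelSpace n) (compatibleJ n) := by
  refine ⟨fun p ⟨hX, _, hY⟩ => (Jsiegel_mem_compatibleJ_iff hY).mpr hX,
    Jsiegel_injOn.mono fun p hp => hp.2.2.det_pos.ne'.isUnit, fun J hJ => ?_⟩
  obtain ⟨X, Y, hY, rfl⟩ := exists_Jsiegel_eq hJ.1 (toBlocks₂₁_posDef_of_mem_compatibleJ hJ)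
  exact ⟨(X, Y), ⟨(Jsiegel_mem_compatibleJ_iff hY).mp hJ, hY.isHermitian, hY⟩, rfl⟩

/-- The map `Z = X + iY ↦ J(Z)` is a bijection from the Siegel
upper half space onto the set of `ω₀`-compatible linear complex structures. -/
theorem siegel_bijOn_compatible (n : ℕ) (hn : 1 ≤ n) :
    Set.BijOn (fun p : Matrix (Fin n) (Fin n) ℝ × Matrix (Fin n) (Fin n) ℝ =>
      Jsiegel n p.1 p.2) (siegelSpace n) (compatibleJ n) :=
  siegel_bijOn_compatible_general n
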